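/- For any Vecchia approximation f̂ of f with conditioning vectors g(i), the expected negative log-density satisfies −2 E[log f̂(x)] = ∑_{i=1}^N log Var(x_i | x_{g(i)}) + N + N·log(2π), where Var(x_i | x_{g(i)}) denotes the (constant) conditional variance of x_i given x_{g(i)} and the expectation is taken under the true law f of x. -/

import Mathlib

open MeasureTheory Real Finset Matrix

noncomputable section

/-- Density of the one-dimensional normal distribution `N(μ, v)` evaluated at `t`. -/
def gauss1 (μ v t : ℝ) : ℝ :=
  (Real.sqrt (2 * π * v))⁻¹ * Real.exp (-((t - μ) ^ 2) / (2 * v))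

variable {ι : Type*} [Fintype ι] [DecidableEq ι]

/-- Joint density of the multivariate normal distribution `N(μ, K)` on `ι → ℝ`. -/
def gaussDensity (μ : ι → ℝ) (K : Matrix ι ι ℝ) (x : ι → ℝ) : ℝ :=
  (Real.sqrt ((2 * π) ^ (Fintype.card ι) * K.det))⁻¹ *
    Real.exp (-(dotProduct (x - μ) (K⁻¹ *ᵥ (x - μ))) / 2)

/-- Submatrix of `K` with rows and columns in the index set `G`. -/
def subm (K : Matrix ι ι ℝ) (G : Finset ι) : Matrix G G ℝ :=
  Matrix.of fun j k => K j.1 k.1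

/-- Gaussian conditional mean `E(x i | x_G)` for `x ~ N(μ, K)`, as a function of `x`. -/
def condMean (μ : ι → ℝ) (K : Matrix ι ι ℝ) (i : ι) (G : Finset ι) (x : ι → ℝ) : ℝ :=
  μ i + dotProduct (fun j : G => K i j.1)
    ((subm K G)⁻¹ *ᵥ fun j : G => x j.1 - μ j.1)

/-- Gaussian conditional variance `Var(x i | x_G)` for `x ~ N(μ, K)`
(it does not depend on the value of `x_G`). -/
def condVar (K : Matrix ι ι ℝ) (i : ι) (G : Finset ι) : ℝ :=
  K i i - dotProduct (fun j : G => K i j.1)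
    ((subm K G)⁻¹ *ᵥ fun j : G => K j.1 i)

/-- Gaussian conditional covariance `Cov(x a, x b | x_G)` for `x ~ N(0, K)`. -/
def condCov (K : Matrix ι ι ℝ) (a b : ι) (G : Finset ι) : ℝ :=
  K a b - dotProduct (fun j : G => K a j.1)
    ((subm K G)⁻¹ *ᵥ fun j : G => K j.1 b)

/-- The exact Gaussian conditional density `f(x i | x_G)` for `x ~ N(μ, K)`. -/
def condDens (μ : ι → ℝ) (K : Matrix ι ι ℝ) (i : ι) (G : Finset ι) (x : ι → ℝ) : ℝ :=
  gauss1 (condMean μ K i G x) (condVar K i G) (x i)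

/-- The general Vecchia approximation `f̂(x) = ∏ i, f(x i | x_{g i})` of `N(μ, K)`. -/
def vecchia (μ : ι → ℝ) (K : Matrix ι ι ℝ) (g : ι → Finset ι) (x : ι → ℝ) : ℝ :=
  ∏ i, condDens μ K i (g i) x

/-- Kullback–Leibler divergence `KL(f ‖ g) = ∫ f log(f/g)` between densities on `ι → ℝ`. -/
def KLdiv (f g : (ι → ℝ) → ℝ) : ℝ :=
  ∫ x : ι → ℝ, f x * Real.log (f x / g x)

/-! Each factor of the Vecchia approximation is a one-dimensional normal density in the residual
`x i - E(x i | x_{g i})`, which is a linear functional `c ⬝ᵥ (x - μ)` of `x`. Hence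
`log f̂(x) = ∑ i, (-log (2π vᵢ) / 2 - (cᵢ ⬝ᵥ (x - μ))² / (2 vᵢ))`, and under the true law
`E[(cᵢ ⬝ᵥ (x - μ))²] = cᵢ ⬝ᵥ K cᵢ = vᵢ` because the residual is uncorrelated with `x_{g i}`.
The Gaussian moments are computed by the substitution `x = μ + S y` with `S Sᵀ = K`, which turns
the density of `N(μ, K)` into the standard normal product density. -/

section Conditioning

variable {n : Type*} [DecidableEq n]

def extendByZero {G : Finset n} (z : G → ℝ) : n → ℝ :=
  fun j => if h : j ∈ G then z ⟨j, h⟩ else 0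

lemma extendByZero_dotProduct [Fintype n] {G : Finset n} (z : G → ℝ) (v : n → ℝ) :
    extendByZero z ⬝ᵥ v = z ⬝ᵥ fun j : G => v j := by
  calc extendByZero z ⬝ᵥ v = ∑ j ∈ G, extendByZero z j * v j :=
        (sum_subset (subset_univ G) fun j _ hj => by simp [extendByZero, hj]).symm
    _ = _ := by simp [← sum_coe_sort G, extendByZero, dotProduct]

def regressionCoeff (K : Matrix n n ℝ) (i : n) (G : Finset n) : G → ℝ :=
  (subm K G)⁻¹ *ᵥ fun j : G => K j i

def residualCoeff (K : Matrix n n ℝ) (i : n) (G : Finset n) : n → ℝ :=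
  Pi.single i 1 - extendByZero (regressionCoeff K i G)

variable {K : Matrix n n ℝ} {i : n} {G : Finset n}

lemma residualCoeff_apply_self (hi : i ∉ G) : residualCoeff K i G i = 1 := by
  simp [residualCoeff, extendByZero, hi]

variable [Fintype n]

lemma residualCoeff_dotProduct (v : n → ℝ) :
    residualCoeff K i G ⬝ᵥ v = v i - regressionCoeff K i G ⬝ᵥ fun j : G => v j := by
  rw [residualCoeff, sub_dotProduct, single_one_dotProduct, extendByZero_dotProduct]

lemma sub_condMean_eq_residualCoeff_dotProduct (hK : K.IsSymm) (μ x : n → ℝ) :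
    x i - condMean μ K i G x = residualCoeff K i G ⬝ᵥ (x - μ) := by
  have hM : (subm K G)⁻¹ᵀ = (subm K G)⁻¹ := (hK.submatrix _).inv
  have hrow : (fun j : G => K i j) = fun j : G => K j i := funext fun j => hK.apply _ _
  rw [residualCoeff_dotProduct, condMean, regressionCoeff, dotProduct_mulVec, hrow,
    ← mulVec_transpose, hM]
  simp only [Pi.sub_apply]
  ring

lemma mulVec_residualCoeff_apply (j : n) :
    (K *ᵥ residualCoeff K i G) j = K j i - regressionCoeff K i G ⬝ᵥ fun k : G => K j k := by
  rw [mulVec, dotProduct_comm, residualCoeff_dotProduct]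

/-- The residual `x i - E(x i | x_G)` is uncorrelated with every `x j`, `j ∈ G`. -/
lemma mulVec_residualCoeff_apply_of_mem (hKG : IsUnit (subm K G).det) {j : n} (hj : j ∈ G) :
    (K *ᵥ residualCoeff K i G) j = 0 := by
  have hw : subm K G *ᵥ regressionCoeff K i G = fun k : G => K k i := by
    rw [regressionCoeff, mulVec_mulVec, mul_nonsing_inv _ hKG, one_mulVec]
  rw [mulVec_residualCoeff_apply, dotProduct_comm]
  exact sub_eq_zero.2 (congrFun hw ⟨j, hj⟩).symm

lemma residualCoeff_dotProduct_mulVec (hKG : IsUnit (subm K G).det) :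
    residualCoeff K i G ⬝ᵥ (K *ᵥ residualCoeff K i G) = condVar K i G := by
  have hG : (fun j : G => (K *ᵥ residualCoeff K i G) j) = 0 :=
    funext fun j => mulVec_residualCoeff_apply_of_mem hKG j.2
  rw [residualCoeff_dotProduct, hG, dotProduct_zero, sub_zero, mulVec_residualCoeff_apply,
    condVar, dotProduct_comm, regressionCoeff]

lemma condVar_pos (hK : K.PosDef) (hi : i ∉ G) : 0 < condVar K i G := by
  have hKG : (subm K G).PosDef := hK.submatrix Subtype.val_injective
  have hc : residualCoeff K i G ≠ 0 := fun h => by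
    simpa [h] using residualCoeff_apply_self (K := K) hi
  rw [← residualCoeff_dotProduct_mulVec hKG.det_pos.ne'.isUnit]
  simpa using hK.dotProduct_mulVec_pos hc

end Conditioning

section StdGaussian

open ProbabilityTheory
open scoped NNReal

lemma integrable_gaussianPDFReal_mul_iff {m : ℝ} {v : ℝ≥0} (hv : v ≠ 0) {f : ℝ → ℝ} :
    Integrable (fun t => gaussianPDFReal m v t * f t) ↔ Integrable f (gaussianReal m v) := by
  rw [gaussianReal_of_var_ne_zero _ hv, integrable_withDensity_iff_integrable_smul'
    (measurable_gaussianPDF _ _) (ae_of_all _ fun _ => gaussianPDF_lt_top)]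
  simp [toReal_gaussianPDF]

lemma integrable_gaussianPDFReal_mul_id : Integrable fun t => gaussianPDFReal 0 1 t * t :=
  (integrable_gaussianPDFReal_mul_iff one_ne_zero).2 <|
    memLp_one_iff_integrable.1 (memLp_id_gaussianReal 1)

lemma integrable_gaussianPDFReal_mul_sq : Integrable fun t => gaussianPDFReal 0 1 t * t ^ 2 :=
  (integrable_gaussianPDFReal_mul_iff one_ne_zero).2 (memLp_id_gaussianReal 2).integrable_sq

lemma integral_gaussianPDFReal_mul_id : ∫ t, gaussianPDFReal 0 1 t * t = 0 := by
  simp [← smul_eq_mul, ← integral_gaussianReal_eq_integral_smul]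

lemma integral_gaussianPDFReal_mul_sq : ∫ t, gaussianPDFReal 0 1 t * t ^ 2 = 1 := by
  have h := variance_fun_id_gaussianReal (μ := 0) (v := 1)
  rw [variance_eq_integral measurable_id'.aemeasurable] at h
  simpa [← smul_eq_mul, ← integral_gaussianReal_eq_integral_smul] using h

variable {n : Type*} [Fintype n]

def stdGaussDensity (y : n → ℝ) : ℝ := ∏ j, gaussianPDFReal 0 1 (y j)

lemma stdGaussDensity_mul_prod (g : n → ℝ → ℝ) (y : n → ℝ) :
    stdGaussDensity y * ∏ j, g j (y j) = ∏ j, gaussianPDFReal 0 1 (y j) * g j (y j) :=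
  (prod_mul_distrib).symm

lemma stdGaussDensity_eq (y : n → ℝ) :
    stdGaussDensity y = (√(2 * π) ^ Fintype.card n)⁻¹ * Real.exp (-(y ⬝ᵥ y) / 2) := by
  simp only [stdGaussDensity, gaussianPDFReal, NNReal.coe_one, mul_one, sub_zero, prod_mul_distrib,
    prod_const, card_univ, ← Real.exp_sum, inv_pow, dotProduct, ← sum_div, ← sum_neg_distrib, sq]

lemma integrable_stdGaussDensity_mul_prod {g : n → ℝ → ℝ}
    (hg : ∀ j, Integrable fun t => gaussianPDFReal 0 1 t * g j t) :
    Integrable fun y => stdGaussDensity y * ∏ j, g j (y j) := by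
  simp_rw [stdGaussDensity_mul_prod]
  exact Integrable.fintype_prod hg

lemma integral_stdGaussDensity_mul_prod (g : n → ℝ → ℝ) :
    ∫ y, stdGaussDensity y * ∏ j, g j (y j) = ∏ j, ∫ t, gaussianPDFReal 0 1 t * g j t := by
  simp_rw [stdGaussDensity_mul_prod]
  exact integral_fintype_prod_volume_eq_prod (fun j t => gaussianPDFReal 0 1 t * g j t)

lemma integrable_stdGaussDensity : Integrable (stdGaussDensity (n := n)) := by
  simpa using integrable_stdGaussDensity_mul_prod (n := n) (g := fun _ _ => 1)
    fun _ => by simpa using integrable_gaussianPDFReal 0 1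

lemma integral_stdGaussDensity : ∫ y, stdGaussDensity (n := n) y = 1 := by
  simpa [integral_gaussianPDFReal_eq_one] using
    integral_stdGaussDensity_mul_prod (n := n) (fun _ _ => 1)

lemma stdGaussDensity_mul_sq_dotProduct (d y : n → ℝ) :
    stdGaussDensity y * (d ⬝ᵥ y) ^ 2 =
      ∑ a, ∑ b, d a * d b * (stdGaussDensity y * (y a * y b)) := by
  rw [sq, dotProduct, sum_mul_sum, mul_sum]
  refine sum_congr rfl fun a _ => ?_
  rw [mul_sum]
  exact sum_congr rfl fun b _ => by ring

variable [DecidableEq n]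

lemma mul_eq_prod_ite (y : n → ℝ) (a b : n) :
    y a * y b = ∏ j, (if j = a then y j else 1) * (if j = b then y j else 1) := by
  rw [prod_mul_distrib, prod_ite_eq' univ a y, prod_ite_eq' univ b y]
  simp

lemma integrable_stdGaussDensity_mul_mul (a b : n) :
    Integrable fun y => stdGaussDensity y * (y a * y b) := by
  have h := integrable_stdGaussDensity_mul_prod
    (g := fun j t => (if j = a then t else 1) * (if j = b then t else 1)) fun j => by
      rcases eq_or_ne j a with rfl | ha <;> rcases eq_or_ne j b with rfl | hb <;>
        simp [*, ← sq, integrable_gaussianPDFReal_mul_sq, integrable_gaussianPDFReal_mul_id,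
          integrable_gaussianPDFReal]
  simpa only [← mul_eq_prod_ite] using h

lemma integral_stdGaussDensity_mul_mul (a b : n) :
    ∫ y, stdGaussDensity y * (y a * y b) = if a = b then 1 else 0 := by
  have h := integral_stdGaussDensity_mul_prod
    (fun j t => (if j = a then t else 1) * (if j = b then t else 1))
  simp only [← mul_eq_prod_ite] at h
  rw [h]
  split_ifs with hab
  · subst hab
    refine prod_eq_one fun j _ => ?_
    by_cases ha : j = a <;>
      simp [ha, ← sq, integral_gaussianPDFReal_mul_sq, integral_gaussianPDFReal_eq_one]
  · refine prod_eq_zero (mem_univ a) ?_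
    simp [hab, integral_gaussianPDFReal_mul_id]

lemma integrable_stdGaussDensity_mul_sq_dotProduct (d : n → ℝ) :
    Integrable fun y => stdGaussDensity y * (d ⬝ᵥ y) ^ 2 := by
  simp_rw [stdGaussDensity_mul_sq_dotProduct]
  exact integrable_finsetSum _ fun a _ => integrable_finsetSum _ fun b _ =>
    (integrable_stdGaussDensity_mul_mul a b).const_mul _

lemma integral_stdGaussDensity_mul_sq_dotProduct (d : n → ℝ) :
    ∫ y, stdGaussDensity y * (d ⬝ᵥ y) ^ 2 = d ⬝ᵥ d := by
  simp_rw [stdGaussDensity_mul_sq_dotProduct]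
  rw [integral_finsetSum _ fun a _ => integrable_finsetSum _ fun b _ =>
    (integrable_stdGaussDensity_mul_mul a b).const_mul _]
  simp_rw [integral_finsetSum _ fun b _ => (integrable_stdGaussDensity_mul_mul _ b).const_mul _,
    integral_const_mul, integral_stdGaussDensity_mul_mul]
  simp [dotProduct]

end StdGaussian

section AffineChange

variable {n : Type*} [Fintype n] [DecidableEq n] {S : Matrix n n ℝ}

lemma measurableEmbedding_affine (hS : S.det ≠ 0) (μ : n → ℝ) :
    MeasurableEmbedding fun y => μ + S *ᵥ y := by
  have hL : LinearMap.det (toLin' S) ≠ 0 := by rwa [LinearMap.det_toLin']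
  exact (MeasurableEquiv.addLeft μ).measurableEmbedding.comp
    ((toLin' S).equivOfDetNeZero hL).toContinuousLinearEquiv.toHomeomorph.measurableEmbedding

lemma map_affine_volume (hS : S.det ≠ 0) (μ : n → ℝ) :
    Measure.map (fun y => μ + S *ᵥ y) volume = ENNReal.ofReal |S.det⁻¹| • volume := by
  have h : (fun y => μ + S *ᵥ y) = (μ + ·) ∘ toLin' S := rfl
  rw [h, ← Measure.map_map (measurable_const_add μ)
      (toLin' S).continuous_of_finiteDimensional.measurable,
    Real.map_matrix_volume_pi_eq_smul_volume_pi hS, Measure.map_smul, map_add_left_eq_self]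

lemma integral_comp_affine (hS : S.det ≠ 0) (μ : n → ℝ) (f : (n → ℝ) → ℝ) :
    ∫ y, f (μ + S *ᵥ y) = |S.det|⁻¹ * ∫ x, f x := by
  rw [← (measurableEmbedding_affine hS μ).integral_map, map_affine_volume hS μ,
    integral_smul_measure, ENNReal.toReal_ofReal (abs_nonneg _), abs_inv, smul_eq_mul]

lemma integrable_comp_affine_iff (hS : S.det ≠ 0) (μ : n → ℝ) {f : (n → ℝ) → ℝ} :
    Integrable (fun y => f (μ + S *ᵥ y)) ↔ Integrable f := by
  rw [← Function.comp_def, ← (measurableEmbedding_affine hS μ).integrable_map_iff,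
    map_affine_volume hS μ, integrable_smul_measure (by simpa using hS) ENNReal.ofReal_ne_top]

end AffineChange

section Factorization

variable {n : Type*} [Fintype n] [DecidableEq n] {K S : Matrix n n ℝ}

open scoped MatrixOrder in
lemma exists_mul_transpose_eq (hK : K.PosSemidef) : ∃ S : Matrix n n ℝ, S * Sᵀ = K := by
  obtain ⟨B, hB⟩ := CStarAlgebra.nonneg_iff_eq_star_mul_self.mp hK.nonneg
  exact ⟨Bᵀ, by simpa [star_eq_conjTranspose] using hB.symm⟩

lemma det_eq_sq_of_mul_transpose_eq (hSK : S * Sᵀ = K) : K.det = S.det ^ 2 := by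
  rw [← hSK, det_mul, det_transpose, sq]

lemma exists_mul_transpose_eq_of_posDef (hK : K.PosDef) :
    ∃ S : Matrix n n ℝ, S * Sᵀ = K ∧ S.det ≠ 0 := by
  obtain ⟨S, hSK⟩ := exists_mul_transpose_eq hK.posSemidef
  refine ⟨S, hSK, fun h => hK.det_pos.ne' ?_⟩
  rw [det_eq_sq_of_mul_transpose_eq hSK, h, sq, zero_mul]

lemma dotProduct_inv_mulVec_of_mul_transpose_eq (hSK : S * Sᵀ = K) (hS : S.det ≠ 0)
    (y : n → ℝ) : (S *ᵥ y) ⬝ᵥ (K⁻¹ *ᵥ (S *ᵥ y)) = y ⬝ᵥ y := by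
  have hS' : IsUnit S.det := hS.isUnit
  have hy : S⁻¹ *ᵥ (S *ᵥ y) = y := by rw [mulVec_mulVec, nonsing_inv_mul _ hS', one_mulVec]
  rw [← hSK, Matrix.mul_inv_rev, ← mulVec_mulVec, hy, dotProduct_mulVec, ← mulVec_transpose,
    mulVec_mulVec, transpose_nonsing_inv, transpose_transpose, nonsing_inv_mul _ hS', one_mulVec]

lemma gaussDensity_affine (hSK : S * Sᵀ = K) (hS : S.det ≠ 0) (μ y : n → ℝ) :
    gaussDensity μ K (μ + S *ᵥ y) = |S.det|⁻¹ * stdGaussDensity y := by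
  have hsqrt : √((2 * π) ^ Fintype.card n * K.det) = √(2 * π) ^ Fintype.card n * |S.det| := by
    have h : (2 * π) ^ Fintype.card n * S.det ^ 2 = (√(2 * π) ^ Fintype.card n * |S.det|) ^ 2 := by
      rw [mul_pow _ |S.det|, sq_abs, ← pow_mul, mul_comm _ 2, pow_mul, Real.sq_sqrt (by positivity)]
    rw [det_eq_sq_of_mul_transpose_eq hSK, h, Real.sqrt_sq (by positivity)]
  rw [gaussDensity, add_sub_cancel_left, dotProduct_inv_mulVec_of_mul_transpose_eq hSK hS,
    hsqrt, stdGaussDensity_eq, mul_inv]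
  ring

end Factorization

section GaussianMoments

variable {n : Type*} [Fintype n] [DecidableEq n] {K S : Matrix n n ℝ}

lemma integral_gaussDensity_mul (hSK : S * Sᵀ = K) (hS : S.det ≠ 0) (μ : n → ℝ)
    (h : (n → ℝ) → ℝ) :
    ∫ x, gaussDensity μ K x * h x = ∫ y, stdGaussDensity y * h (μ + S *ᵥ y) := by
  have hS' : |S.det|⁻¹ ≠ 0 := inv_ne_zero (abs_ne_zero.2 hS)
  have hcv := integral_comp_affine hS μ fun x => gaussDensity μ K x * h x
  simp only [gaussDensity_affine hSK hS, mul_assoc, integral_const_mul] at hcv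
  exact (mul_left_cancel₀ hS' hcv).symm

lemma integrable_gaussDensity_mul_iff (hSK : S * Sᵀ = K) (hS : S.det ≠ 0) (μ : n → ℝ)
    {h : (n → ℝ) → ℝ} :
    Integrable (fun x => gaussDensity μ K x * h x) ↔
      Integrable fun y => stdGaussDensity y * h (μ + S *ᵥ y) := by
  rw [← integrable_comp_affine_iff hS μ]
  simp only [gaussDensity_affine hSK hS, mul_assoc]
  exact integrable_const_mul_iff (isUnit_iff_ne_zero.2 (inv_ne_zero (abs_ne_zero.2 hS))) _

variable (hK : K.PosDef) (μ : n → ℝ)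
include hK

lemma integrable_gaussDensity : Integrable (gaussDensity μ K) := by
  obtain ⟨S, hSK, hS⟩ := exists_mul_transpose_eq_of_posDef hK
  simpa using (integrable_gaussDensity_mul_iff hSK hS μ (h := 1)).2
    (by simpa using integrable_stdGaussDensity)

lemma integral_gaussDensity : ∫ x, gaussDensity μ K x = 1 := by
  obtain ⟨S, hSK, hS⟩ := exists_mul_transpose_eq_of_posDef hK
  simpa [integral_stdGaussDensity] using integral_gaussDensity_mul hSK hS μ 1

lemma integrable_gaussDensity_mul_sq_dotProduct (c : n → ℝ) :
    Integrable fun x => gaussDensity μ K x * (c ⬝ᵥ (x - μ)) ^ 2 := by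
  obtain ⟨S, hSK, hS⟩ := exists_mul_transpose_eq_of_posDef hK
  rw [integrable_gaussDensity_mul_iff hSK hS μ]
  simpa only [add_sub_cancel_left, dotProduct_mulVec, ← mulVec_transpose] using
    integrable_stdGaussDensity_mul_sq_dotProduct (Sᵀ *ᵥ c)

lemma integral_gaussDensity_mul_sq_dotProduct (c : n → ℝ) :
    ∫ x, gaussDensity μ K x * (c ⬝ᵥ (x - μ)) ^ 2 = c ⬝ᵥ (K *ᵥ c) := by
  obtain ⟨S, hSK, hS⟩ := exists_mul_transpose_eq_of_posDef hK
  simp only [integral_gaussDensity_mul hSK hS μ, add_sub_cancel_left, dotProduct_mulVec,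
    ← mulVec_transpose, integral_stdGaussDensity_mul_sq_dotProduct]
  rw [transpose_transpose, mulVec_mulVec, hSK, (isHermitian_iff_isSymm.1 hK.isHermitian).eq]

end GaussianMoments

lemma gauss1_pos {v : ℝ} (hv : 0 < v) (m t : ℝ) : 0 < gauss1 m v t := by
  unfold gauss1
  positivity

lemma log_gauss1 {v : ℝ} (hv : 0 < v) (m t : ℝ) :
    Real.log (gauss1 m v t) = -Real.log (2 * π * v) / 2 - (2 * v)⁻¹ * (t - m) ^ 2 := by
  rw [gauss1, Real.log_mul (by positivity) (Real.exp_ne_zero _), Real.log_exp, Real.log_inv,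
    Real.log_sqrt (by positivity)]
  ring

section Vecchia

variable {n : Type*} [Fintype n] [DecidableEq n] {K : Matrix n n ℝ} (hK : K.PosDef) (μ : n → ℝ)
  {i : n} {G : Finset n}
include hK

lemma gaussDensity_mul_log_condDens (hi : i ∉ G) (x : n → ℝ) :
    gaussDensity μ K x * Real.log (condDens μ K i G x) =
      -Real.log (2 * π * condVar K i G) / 2 * gaussDensity μ K x -
        (2 * condVar K i G)⁻¹ * (gaussDensity μ K x * (residualCoeff K i G ⬝ᵥ (x - μ)) ^ 2) := by
  rw [condDens, log_gauss1 (condVar_pos hK hi),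
    sub_condMean_eq_residualCoeff_dotProduct (isHermitian_iff_isSymm.1 hK.isHermitian)]
  ring

lemma integrable_gaussDensity_mul_log_condDens (hi : i ∉ G) :
    Integrable fun x => gaussDensity μ K x * Real.log (condDens μ K i G x) := by
  simp_rw [gaussDensity_mul_log_condDens hK μ hi]
  exact ((integrable_gaussDensity hK μ).const_mul _).sub
    ((integrable_gaussDensity_mul_sq_dotProduct hK μ _).const_mul _)

lemma integral_gaussDensity_mul_log_condDens (hi : i ∉ G) :
    ∫ x, gaussDensity μ K x * Real.log (condDens μ K i G x) =
      -(Real.log (2 * π * condVar K i G) + 1) / 2 := by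
  have hKG : IsUnit (subm K G).det := (hK.submatrix Subtype.val_injective).det_pos.ne'.isUnit
  simp_rw [gaussDensity_mul_log_condDens hK μ hi]
  rw [integral_sub ((integrable_gaussDensity hK μ).const_mul _)
      ((integrable_gaussDensity_mul_sq_dotProduct hK μ _).const_mul _),
    integral_const_mul, integral_const_mul, integral_gaussDensity hK μ,
    integral_gaussDensity_mul_sq_dotProduct hK μ, residualCoeff_dotProduct_mulVec hKG]
  field_simp [(condVar_pos hK hi).ne']
  ring

lemma integral_gaussDensity_mul_log_vecchia {g : n → Finset n} (hg : ∀ i, i ∉ g i) :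
    ∫ x, gaussDensity μ K x * Real.log (vecchia μ K g x) =
      ∑ i, -(Real.log (2 * π * condVar K i (g i)) + 1) / 2 := by
  have hlog (x : n → ℝ) : Real.log (vecchia μ K g x) = ∑ i, Real.log (condDens μ K i (g i) x) :=
    Real.log_prod fun i _ => (gauss1_pos (condVar_pos hK (hg i)) _ _).ne'
  simp_rw [hlog, mul_sum]
  rw [integral_finsetSum _ fun i _ => integrable_gaussDensity_mul_log_condDens hK μ (hg i)]
  exact sum_congr rfl fun i _ => integral_gaussDensity_mul_log_condDens hK μ (hg i)

end Vecchia

/-- The expected negative log-density of a Vecchia approximation under the true Gaussian law: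
`−2 E[log f̂(x)] = ∑ᵢ log Var(xᵢ | x_{g(i)}) + N + N log(2π)`. -/
theorem expected_log_vecchia_density
    {N : ℕ} (μ : Fin N → ℝ) (K : Matrix (Fin N) (Fin N) ℝ) (hK : K.PosDef)
    (g : Fin N → Finset (Fin N)) (hg : ∀ i, g i ⊆ Finset.Iio i) :
    (-2) * ∫ x : Fin N → ℝ, gaussDensity μ K x * Real.log (vecchia μ K g x) =
      (∑ i, Real.log (condVar K i (g i))) + N + N * Real.log (2 * π) := by
  have hgi (i : Fin N) : i ∉ g i := fun h => (lt_irrefl i) (mem_Iio.1 (hg i h))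
  rw [integral_gaussDensity_mul_log_vecchia hK μ hgi, mul_sum]
  calc ∑ i, -2 * (-(Real.log (2 * π * condVar K i (g i)) + 1) / 2)
      = ∑ i, (Real.log (condVar K i (g i)) + 1 + Real.log (2 * π)) :=
        sum_congr rfl fun i _ => by
          rw [Real.log_mul (by positivity) (condVar_pos hK (hgi i)).ne']
          ring
    _ = (∑ i, Real.log (condVar K i (g i))) + N + N * Real.log (2 * π) := by
        simp [sum_add_distrib]

end
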